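/- Assume the pure peakon assumption, and define the Weyl functions W(z) = −B_n(z)/(2·z·A_n(z)) and Z(z) = C_n(z)/(2·z·A_n(z)). Then for every 1 ≤ k ≤ n, the function z ↦ W(z) + s_{21}(z)/(2·z·s_{11}(z)) is O(1/z^{k+1}) as z → +∞, and the function z ↦ Z(z) − s_{31}(z)/(2·z·s_{11}(z)) is O(1/z^{k+1}) as z → +∞. -/

import Mathlib

open Matrix

/-- The 3×3 matrix `S(x,m;z) = I − z·m·v(x)·w(x)ᵀ` with
`v(x) = (e^{−x}, −2, e^{x})ᵀ` and `w(x) = (e^{x}, 1, e^{−x})ᵀ`. -/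
noncomputable def Speak (x m z : ℝ) : Matrix (Fin 3) (Fin 3) ℝ :=
  1 - (z * m) • vecMulVec ![Real.exp (-x), -2, Real.exp x] ![Real.exp x, 1, Real.exp (-x)]

/-- `S_{[n,k]}(z) = S_n(z) · S_{n−1}(z) ⋯ S_{n−k+1}(z)`, where `S_j(z) = S(x_j, m_j; z)`. -/
noncomputable def Sblock (x m : ℕ → ℝ) (n k : ℕ) (z : ℝ) : Matrix (Fin 3) (Fin 3) ℝ :=
  ((List.range k).map (fun i => Speak (x (n - i)) (m (n - i)) z)).prod

/-- The vector `(A_j(z), B_j(z), C_j(z))ᵀ = S_j(z) · S_{j−1}(z) ⋯ S_1(z) · (1,0,0)ᵀ`. -/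
noncomputable def ABCvec (x m : ℕ → ℝ) (j : ℕ) (z : ℝ) : Fin 3 → ℝ :=
  (((List.range j).map (fun i => Speak (x (j - i)) (m (j - i)) z)).prod).mulVec ![1, 0, 0]

/-!
Treat `z` as an indeterminate. Then `S_{[n,k]}` and `S_{[n,n]} = S_{[n,k]} S_{[n-k,n-k]}` are
matrices of polynomials of degree `≤ k` and `≤ n`. Let `u` be the first column of
`S_{[n-k,n-k]}`, `a = (A_n, B_n, C_n) = S_{[n,k]} u` and `b` the first column of `S_{[n,k]}`; both
remainders are components of `a × b` divided by `2 z A_n s₁₁`. Now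
`a × b = (u × e₁) adj S_{[n,k]}`, and `adj S_j = S(x_j, -m_j; z)` because `S_j` is a rank-one
perturbation of `I` with `w(x_j) · v(x_j) = 0`, so the numerators have degree `≤ (n - k) + k = n`.
The coefficient of `z^k` in `S_{[n,k]}` is the product of the rank-one matrices
`-m_j v(x_j) w(x_j)ᵀ`, a nonzero multiple of `v(x_n) w(x_{n-k+1})ᵀ` under PPA since
`w(x_{j+1}) · v(x_j) = 2 cosh (x_{j+1} - x_j) - 2 ≠ 0`. Hence `s₁₁` and `A_n` have exact degrees
`k` and `n`, the denominator has degree `n + k + 1`, and the quotient is `O(z^{-(k+1)})`.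
-/

open Polynomial Filter Asymptotics

lemma List.prod_map_range_sub_eq_mul {M : Type*} [Monoid M] (f : ℕ → M) {n k : ℕ} (hk : k ≤ n) :
    ((List.range n).map fun i => f (n - i)).prod
      = ((List.range k).map fun i => f (n - i)).prod
        * ((List.range (n - k)).map fun i => f (n - k - i)).prod := by
  obtain ⟨j, rfl⟩ := Nat.exists_eq_add_of_le hk
  rw [List.range_add, List.map_append, List.prod_append, List.map_map, Nat.add_sub_cancel_left]
  congr 3
  funext i
  simp only [Function.comp_apply]
  congr 1
  omega

lemma Matrix.adjugate_list_prod {ι R : Type*} [Fintype ι] [DecidableEq ι] [CommRing R]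
    (l : List (Matrix ι ι R)) : l.prod.adjugate = (l.map adjugate).reverse.prod := by
  induction l with
  | nil => simp
  | cons M l ih => simp [adjugate_mul_distrib, ih]

lemma Matrix.adjugate_one_sub_smul_vecMulVec {ι R : Type*} [Fintype ι] [DecidableEq ι]
    [CommRing R] {u v : ι → R} (h : v ⬝ᵥ u = 0) (t : R) :
    (1 - t • vecMulVec u v).adjugate = 1 + t • vecMulVec u v := by
  have hdet : (1 - t • vecMulVec u v).det = 1 := by
    rw [sub_eq_add_neg, ← neg_smul, ← smul_vecMulVec, vecMulVec_eq (Fin 1),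
      det_one_add_replicateCol_mul_replicateRow, dotProduct_smul, h, smul_zero, add_zero]
  have hsq : vecMulVec u v * vecMulVec u v = 0 := by
    rw [vecMulVec_mul_vecMulVec, h, zero_smul, vecMulVec_zero]
  have hinv : (1 - t • vecMulVec u v) * (1 + t • vecMulVec u v) = 1 := by
    rw [mul_add, mul_one, sub_mul, one_mul, smul_mul_smul, hsq, smul_zero, sub_zero,
      sub_add_cancel]
  calc (1 - t • vecMulVec u v).adjugate
      = (1 - t • vecMulVec u v).adjugate * (1 - t • vecMulVec u v) * (1 + t • vecMulVec u v) := by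
        rw [mul_assoc, hinv, mul_one]
    _ = 1 + t • vecMulVec u v := by rw [adjugate_mul, hdet, one_smul, one_mul]

lemma Matrix.prod_map_range_smul_vecMulVec {ι R : Type*} [Fintype ι] [DecidableEq ι]
    [CommSemiring R] (c : ℕ → R) (u v : ℕ → ι → R) (k : ℕ) :
    ((List.range (k + 1)).map fun i => c i • vecMulVec (u i) (v i)).prod
      = ((∏ i ∈ Finset.range (k + 1), c i) * ∏ i ∈ Finset.range k, v i ⬝ᵥ u (i + 1))
          • vecMulVec (u 0) (v k) := by
  induction k with
  | zero => simp
  | succ k ih =>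
    rw [List.range_succ, List.map_append, List.prod_append, ih]
    simp only [List.map_cons, List.map_nil, List.prod_cons, List.prod_nil, mul_one, smul_mul_smul,
      vecMulVec_mul_vecMulVec, vecMulVec_smul, smul_smul, Finset.prod_range_succ _ (k + 1),
      Finset.prod_range_succ _ k]
    congr 1
    ring

lemma Matrix.mulVec_cross_mulVec {R : Type*} [CommRing R] (M : Matrix (Fin 3) (Fin 3) R)
    (u v : Fin 3 → R) : (M *ᵥ u) ⨯₃ (M *ᵥ v) = (u ⨯₃ v) ᵥ* M.adjugate := by
  ext i
  fin_cases i <;>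
  · simp [cross_apply, adjugate_fin_three, mulVec, vecMul, dotProduct, Fin.sum_univ_three]
    ring

section PolynomialMatrix

variable {ι R : Type*} [Fintype ι] [DecidableEq ι] [CommSemiring R]

lemma natDegree_matPolyEquiv_le_iff {M : Matrix ι ι R[X]} {d : ℕ} :
    (matPolyEquiv M).natDegree ≤ d ↔ ∀ i j, (M i j).natDegree ≤ d := by
  simp only [natDegree_le_iff_coeff_eq_zero, ← matPolyEquiv_coeff_apply]
  exact ⟨fun h i j N hN => by rw [h N hN]; rfl, fun h N hN => by ext i j; exact h i j N hN⟩

variable {l : List (Matrix ι ι R[X])} {d : ℕ}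

lemma natDegree_matPolyEquiv_list_le (hl : ∀ M ∈ l, ∀ i j, (M i j).natDegree ≤ d) :
    ∀ p ∈ l.map matPolyEquiv, p.natDegree ≤ d := by
  simpa using fun M hM => natDegree_matPolyEquiv_le_iff.mpr (hl M hM)

lemma natDegree_list_prod_apply_le (hl : ∀ M ∈ l, ∀ i j, (M i j).natDegree ≤ d) (i j : ι) :
    (l.prod i j).natDegree ≤ l.length * d := by
  refine natDegree_matPolyEquiv_le_iff.mp ?_ i j
  rw [map_list_prod]
  refine (natDegree_list_prod_le _).trans ?_
  simpa using List.sum_le_card_nsmul ((l.map matPolyEquiv).map natDegree) d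
    (by simpa using natDegree_matPolyEquiv_list_le hl)

lemma coeff_list_prod_apply (hl : ∀ M ∈ l, ∀ i j, (M i j).natDegree ≤ d) (i j : ι) :
    (l.prod i j).coeff (l.length * d) = (l.map (·.map (coeff · d))).prod i j := by
  have h := coeff_list_prod_of_natDegree_le _ _ (natDegree_matPolyEquiv_list_le hl)
  rw [List.length_map, ← map_list_prod, List.map_map] at h
  rw [← matPolyEquiv_coeff_apply, h]
  have hcoeff :
      (fun M => (matPolyEquiv M).coeff d) = fun M : Matrix ι ι R[X] => M.map (coeff · d) := by
    ext M i j
    simp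
  simp only [Function.comp_def, hcoeff]

end PolynomialMatrix

section Degree

variable {R : Type*} [CommRing R] {a b : ℕ}

lemma natDegree_cross_apply_le {u v : Fin 3 → R[X]} (hu : ∀ i, (u i).natDegree ≤ a)
    (hv : ∀ i, (v i).natDegree ≤ b) (i : Fin 3) : ((u ⨯₃ v) i).natDegree ≤ a + b := by
  have h : ∀ i j, (u i * v j).natDegree ≤ a + b := fun i j =>
    natDegree_mul_le.trans (add_le_add (hu i) (hv j))
  fin_cases i <;> exact (natDegree_sub_le _ _).trans (max_le (h _ _) (h _ _))

lemma natDegree_vecMul_apply_le {ι : Type*} [Fintype ι] {v : ι → R[X]} {M : Matrix ι ι R[X]}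
    (hv : ∀ i, (v i).natDegree ≤ a) (hM : ∀ i j, (M i j).natDegree ≤ b) (j : ι) :
    ((v ᵥ* M) j).natDegree ≤ a + b :=
  natDegree_sum_le_of_forall_le _ _ fun i _ => natDegree_mul_le.trans (add_le_add (hv i) (hM i j))

end Degree

lemma isBigO_div_of_natDegree_add_le {P Q : ℝ[X]} {j : ℕ} (hQ : Q ≠ 0)
    (h : P.natDegree + j ≤ Q.natDegree) :
    (fun z => eval z P / eval z Q) =O[atTop] fun z => 1 / z ^ j := by
  have hdeg : (X ^ j * P).degree ≤ Q.degree := by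
    rw [degree_eq_natDegree hQ, ← natDegree_le_iff_degree_le]
    exact natDegree_mul_le.trans (by rw [natDegree_X_pow]; omega)
  have hO := isBigO_atTop_of_degree_le _ _ hdeg
  simp only [eval_mul, eval_pow, eval_X] at hO
  rw [isBigO_mul_iff_isBigO_div ((eventually_gt_atTop 0).mono fun z hz => pow_ne_zero j hz.ne')]
    at hO
  refine (hO.mul (isBigO_refl (fun z => (eval z Q)⁻¹) atTop)).congr'
    (Eventually.of_forall fun z => (div_eq_mul_inv _ _).symm) ?_
  filter_upwards [eventually_atTop_not_isRoot _ hQ] with z hz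
  rw [div_mul_eq_mul_div, mul_inv_cancel₀ hz]

noncomputable def peakonV (x : ℝ) : Fin 3 → ℝ := ![Real.exp (-x), -2, Real.exp x]

noncomputable def peakonW (x : ℝ) : Fin 3 → ℝ := ![Real.exp x, 1, Real.exp (-x)]

lemma peakonW_dotProduct_peakonV (a b : ℝ) :
    peakonW a ⬝ᵥ peakonV b = 2 * Real.cosh (a - b) - 2 := by
  simp [peakonW, peakonV, dotProduct, Fin.sum_univ_three, Real.cosh_eq, Real.exp_sub,
    Real.exp_neg]
  ring

noncomputable def peakonPoly (x m : ℝ) : Matrix (Fin 3) (Fin 3) ℝ[X] :=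
  1 - (X * C m) • vecMulVec (C ∘ peakonV x) (C ∘ peakonW x)

lemma peakonPoly_apply (x m : ℝ) (i j : Fin 3) :
    peakonPoly x m i j = (1 : Matrix (Fin 3) (Fin 3) ℝ[X]) i j
      - C (m * (peakonV x i * peakonW x j)) * X := by
  simp only [peakonPoly, Matrix.sub_apply, Matrix.smul_apply, vecMulVec_apply, Function.comp_apply,
    smul_eq_mul, C_mul]
  ring

lemma map_eval_peakonPoly (x m z : ℝ) : (peakonPoly x m).map (eval z) = Speak x m z := by
  ext i j
  change _ = (1 - (z * m) • vecMulVec (peakonV x) (peakonW x)) i j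
  rw [map_apply, peakonPoly_apply]
  simp [Matrix.one_apply, apply_ite, vecMulVec_apply]
  ring

lemma natDegree_peakonPoly_le (x m : ℝ) (i j : Fin 3) : (peakonPoly x m i j).natDegree ≤ 1 := by
  rw [peakonPoly_apply]
  refine (natDegree_sub_le _ _).trans (max_le ?_ ((natDegree_C_mul_le _ _).trans natDegree_X_le))
  rcases eq_or_ne i j with rfl | h <;> simp [*]

lemma map_coeff_one_peakonPoly (x m : ℝ) :
    (peakonPoly x m).map (coeff · 1) = (-m) • vecMulVec (peakonV x) (peakonW x) := by
  ext i j
  rw [map_apply, peakonPoly_apply, coeff_sub, coeff_C_mul_X]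
  rcases eq_or_ne i j with rfl | h <;> simp [*, vecMulVec_apply, coeff_one]

lemma adjugate_peakonPoly (x m : ℝ) : (peakonPoly x m).adjugate = peakonPoly x (-m) := by
  have h : (C ∘ peakonW x) ⬝ᵥ (C ∘ peakonV x) = 0 := by
    rw [← RingHom.map_dotProduct, peakonW_dotProduct_peakonV, sub_self, Real.cosh_zero]
    simp
  rw [peakonPoly, adjugate_one_sub_smul_vecMulVec h, peakonPoly, C_neg, mul_neg, neg_smul,
    sub_neg_eq_add]

noncomputable def blockPoly (x m : ℕ → ℝ) (n k : ℕ) : Matrix (Fin 3) (Fin 3) ℝ[X] :=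
  ((List.range k).map fun i => peakonPoly (x (n - i)) (m (n - i))).prod

lemma blockPoly_eq_mul (x m : ℕ → ℝ) {n k : ℕ} (hk : k ≤ n) :
    blockPoly x m n n = blockPoly x m n k * blockPoly x m (n - k) (n - k) :=
  List.prod_map_range_sub_eq_mul (fun i => peakonPoly (x i) (m i)) hk

lemma map_eval_blockPoly (x m : ℕ → ℝ) (n k : ℕ) (z : ℝ) :
    (blockPoly x m n k).map (eval z) = Sblock x m n k z := by
  change (evalRingHom z).mapMatrix (blockPoly x m n k) = _
  rw [blockPoly, map_list_prod, List.map_map, Sblock]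
  exact congrArg List.prod (List.map_congr_left fun i _ => map_eval_peakonPoly _ _ z)

lemma Sblock_apply (x m : ℕ → ℝ) (n k : ℕ) (z : ℝ) (i j : Fin 3) :
    Sblock x m n k z i j = eval z (blockPoly x m n k i j) := by
  rw [← map_eval_blockPoly, map_apply]

lemma ABCvec_apply (x m : ℕ → ℝ) (n : ℕ) (z : ℝ) (i : Fin 3) :
    ABCvec x m n z i = eval z (blockPoly x m n n i 0) := by
  rw [← Sblock_apply]
  change (Sblock x m n n z *ᵥ ![1, 0, 0]) i = _
  simp [mulVec, dotProduct, Fin.sum_univ_three]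

lemma natDegree_blockPoly_le (x m : ℕ → ℝ) (n k : ℕ) (i j : Fin 3) :
    (blockPoly x m n k i j).natDegree ≤ k := by
  simpa [blockPoly] using natDegree_list_prod_apply_le (d := 1)
    (l := (List.range k).map fun i => peakonPoly (x (n - i)) (m (n - i)))
    (by simp [natDegree_peakonPoly_le]) i j

lemma natDegree_adjugate_blockPoly_le (x m : ℕ → ℝ) (n k : ℕ) (i j : Fin 3) :
    ((blockPoly x m n k).adjugate i j).natDegree ≤ k := by
  rw [blockPoly, adjugate_list_prod]
  simpa using natDegree_list_prod_apply_le (d := 1)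
    (l := (((List.range k).map fun i => peakonPoly (x (n - i)) (m (n - i))).map adjugate).reverse)
    (by simp [adjugate_peakonPoly, natDegree_peakonPoly_le]) i j

lemma coeff_blockPoly (x m : ℕ → ℝ) (n k : ℕ) (i j : Fin 3) :
    (blockPoly x m n k i j).coeff k = ((List.range k).map fun i =>
      (-m (n - i)) • vecMulVec (peakonV (x (n - i))) (peakonW (x (n - i)))).prod i j := by
  simpa [blockPoly, Function.comp_def, map_coeff_one_peakonPoly] using
    coeff_list_prod_apply (d := 1)
      (l := (List.range k).map fun i => peakonPoly (x (n - i)) (m (n - i)))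
      (by simp [natDegree_peakonPoly_le]) i j

lemma coeff_blockPoly_zero_zero_ne_zero {x m : ℕ → ℝ} {n k : ℕ}
    (hm : ∀ i, 1 ≤ i → i ≤ n → m i ≠ 0) (hx : ∀ i, 1 ≤ i → i < n → x i ≠ x (i + 1))
    (hk : k ≤ n) : (blockPoly x m n k 0 0).coeff k ≠ 0 := by
  rw [coeff_blockPoly]
  rcases k with _ | k
  · simp
  rw [prod_map_range_smul_vecMulVec (fun i => -m (n - i)) (fun i => peakonV (x (n - i)))
    (fun i => peakonW (x (n - i)))]
  simp only [Matrix.smul_apply, vecMulVec_apply, smul_eq_mul]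
  refine mul_ne_zero (mul_ne_zero ?_ ?_) (mul_ne_zero ?_ ?_)
  · refine Finset.prod_ne_zero_iff.mpr fun i hi => neg_ne_zero.mpr (hm _ ?_ ?_) <;>
    · rw [Finset.mem_range] at hi; omega
  · refine Finset.prod_ne_zero_iff.mpr fun i hi => ?_
    rw [Finset.mem_range] at hi
    have hne := hx (n - (i + 1)) (by omega) (by omega)
    rw [show n - (i + 1) + 1 = n - i by omega] at hne
    have := Real.one_lt_cosh.mpr (sub_ne_zero.mpr hne.symm)
    rw [peakonW_dotProduct_peakonV]
    linarith
  · simp [peakonV, Real.exp_ne_zero]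
  · simp [peakonW, Real.exp_ne_zero]

lemma natDegree_blockPoly_zero_zero {x m : ℕ → ℝ} {n k : ℕ}
    (hm : ∀ i, 1 ≤ i → i ≤ n → m i ≠ 0) (hx : ∀ i, 1 ≤ i → i < n → x i ≠ x (i + 1))
    (hk : k ≤ n) : (blockPoly x m n k 0 0).natDegree = k :=
  natDegree_eq_of_le_of_coeff_ne_zero (natDegree_blockPoly_le ..)
    (coeff_blockPoly_zero_zero_ne_zero hm hx hk)

lemma blockPoly_zero_zero_ne_zero {x m : ℕ → ℝ} {n k : ℕ}
    (hm : ∀ i, 1 ≤ i → i ≤ n → m i ≠ 0) (hx : ∀ i, 1 ≤ i → i < n → x i ≠ x (i + 1))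
    (hk : k ≤ n) : blockPoly x m n k 0 0 ≠ 0 := fun h =>
  coeff_blockPoly_zero_zero_ne_zero hm hx hk (by rw [h, coeff_zero])

noncomputable def remainderNum (x m : ℕ → ℝ) (n k : ℕ) : Fin 3 → ℝ[X] :=
  (fun j => blockPoly x m n n j 0) ⨯₃ fun j => blockPoly x m n k j 0

noncomputable def remainderDen (x m : ℕ → ℝ) (n k : ℕ) : ℝ[X] :=
  C 2 * X * (blockPoly x m n n 0 0 * blockPoly x m n k 0 0)

lemma natDegree_remainderNum_le (x m : ℕ → ℝ) {n k : ℕ} (hk : k ≤ n) (i : Fin 3) :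
    (remainderNum x m n k i).natDegree ≤ n := by
  set S := blockPoly x m n k
  set U := blockPoly x m (n - k) (n - k)
  have hSU : (fun j => (S * U) j 0) = S *ᵥ fun t => U t 0 := by
    ext j
    simp [mul_apply, mulVec, dotProduct]
  have hS : (fun j => S j 0) = S *ᵥ Pi.single 0 1 := by
    ext j
    simp
  have hsingle : ∀ t, ((Pi.single 0 1 : Fin 3 → ℝ[X]) t).natDegree ≤ 0 := fun t => by
    rcases eq_or_ne t 0 with rfl | h <;> simp [*]
  rw [remainderNum, blockPoly_eq_mul x m hk, hSU, hS, mulVec_cross_mulVec]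
  refine (natDegree_vecMul_apply_le (fun j => natDegree_cross_apply_le
    (natDegree_blockPoly_le x m (n - k) (n - k) · 0) hsingle j)
    (natDegree_adjugate_blockPoly_le x m n k) i).trans ?_
  omega

lemma remainderDen_ne_zero {x m : ℕ → ℝ} {n k : ℕ}
    (hm : ∀ i, 1 ≤ i → i ≤ n → m i ≠ 0) (hx : ∀ i, 1 ≤ i → i < n → x i ≠ x (i + 1))
    (hk : k ≤ n) : remainderDen x m n k ≠ 0 := by
  simp [remainderDen, blockPoly_zero_zero_ne_zero hm hx hk,
    blockPoly_zero_zero_ne_zero hm hx le_rfl]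

lemma natDegree_remainderDen {x m : ℕ → ℝ} {n k : ℕ}
    (hm : ∀ i, 1 ≤ i → i ≤ n → m i ≠ 0) (hx : ∀ i, 1 ≤ i → i < n → x i ≠ x (i + 1))
    (hk : k ≤ n) : (remainderDen x m n k).natDegree = n + k + 1 := by
  have hA := blockPoly_zero_zero_ne_zero hm hx le_rfl
  have hs := blockPoly_zero_zero_ne_zero hm hx hk
  rw [remainderDen, natDegree_mul (by simp) (mul_ne_zero hA hs), natDegree_C_mul_X _ two_ne_zero,
    natDegree_mul hA hs, natDegree_blockPoly_zero_zero hm hx le_rfl,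
    natDegree_blockPoly_zero_zero hm hx hk]
  omega

lemma isBigO_remainderNum_div_remainderDen {x m : ℕ → ℝ} {n k : ℕ}
    (hm : ∀ i, 1 ≤ i → i ≤ n → m i ≠ 0) (hx : ∀ i, 1 ≤ i → i < n → x i ≠ x (i + 1))
    (hk : k ≤ n) (i : Fin 3) :
    (fun z => eval z (remainderNum x m n k i) / eval z (remainderDen x m n k))
      =O[atTop] fun z => 1 / z ^ (k + 1) := by
  refine isBigO_div_of_natDegree_add_le (remainderDen_ne_zero hm hx hk) ?_
  rw [natDegree_remainderDen hm hx hk, ← add_assoc]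
  exact Nat.add_le_add_right (natDegree_remainderNum_le x m hk i) (k + 1)

lemma weyl_remainders_eq_cross {a b : Fin 3 → ℝ} {z : ℝ} (ha : a 0 ≠ 0) (hb : b 0 ≠ 0)
    (hz : z ≠ 0) :
    -a 1 / (2 * z * a 0) + b 1 / (2 * z * b 0) = (a ⨯₃ b) 2 / (2 * z * (a 0 * b 0)) ∧
      a 2 / (2 * z * a 0) - b 2 / (2 * z * b 0) = (a ⨯₃ b) 1 / (2 * z * (a 0 * b 0)) := by
  simp only [cross_apply, Matrix.cons_val]
  constructor
  · field_simp
    ring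
  · field_simp

lemma eventually_remainders_eq {x m : ℕ → ℝ} {n k : ℕ}
    (hm : ∀ i, 1 ≤ i → i ≤ n → m i ≠ 0) (hx : ∀ i, 1 ≤ i → i < n → x i ≠ x (i + 1))
    (hk : k ≤ n) : ∀ᶠ z in atTop,
      -ABCvec x m n z 1 / (2 * z * ABCvec x m n z 0)
          + Sblock x m n k z 1 0 / (2 * z * Sblock x m n k z 0 0)
        = eval z (remainderNum x m n k 2) / eval z (remainderDen x m n k) ∧
      ABCvec x m n z 2 / (2 * z * ABCvec x m n z 0)
          - Sblock x m n k z 2 0 / (2 * z * Sblock x m n k z 0 0)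
        = eval z (remainderNum x m n k 1) / eval z (remainderDen x m n k) := by
  filter_upwards [eventually_atTop_not_isRoot _ (blockPoly_zero_zero_ne_zero hm hx le_rfl),
    eventually_atTop_not_isRoot _ (blockPoly_zero_zero_ne_zero hm hx hk), eventually_ne_atTop 0]
    with z ha hb hz
  have hcross i : eval z (remainderNum x m n k i) = ((fun j => eval z (blockPoly x m n n j 0)) ⨯₃
      fun j => eval z (blockPoly x m n k j 0)) i := by
    fin_cases i <;> simp [remainderNum, cross_apply]
  simp only [ABCvec_apply, Sblock_apply, hcross, remainderDen, eval_mul, eval_C, eval_X]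
  exact weyl_remainders_eq_cross (a := fun j => eval z (blockPoly x m n n j 0))
    (b := fun j => eval z (blockPoly x m n k j 0)) ha hb hz

theorem weyl_functions_approx_general (n : ℕ) (x m : ℕ → ℝ)
    (hm : ∀ i, 1 ≤ i → i ≤ n → 0 < m i)
    (hx : ∀ i, 1 ≤ i → i < n → x i < x (i + 1))
    (W Z : ℝ → ℝ)
    (hW : ∀ z, W z = -(ABCvec x m n z 1) / (2 * z * ABCvec x m n z 0))
    (hZ : ∀ z, Z z = ABCvec x m n z 2 / (2 * z * ABCvec x m n z 0))
    (k : ℕ) (hkn : k ≤ n) :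
    ((fun z : ℝ => W z + Sblock x m n k z 1 0 / (2 * z * Sblock x m n k z 0 0))
        =O[Filter.atTop] (fun z : ℝ => 1 / z ^ (k + 1))) ∧
    ((fun z : ℝ => Z z - Sblock x m n k z 2 0 / (2 * z * Sblock x m n k z 0 0))
        =O[Filter.atTop] (fun z : ℝ => 1 / z ^ (k + 1))) := by
  have hm' i h₁ h₂ : m i ≠ 0 := (hm i h₁ h₂).ne'
  have hx' i h₁ h₂ : x i ≠ x (i + 1) := (hx i h₁ h₂).ne
  have hrem := eventually_remainders_eq hm' hx' hkn
  refine ⟨(isBigO_remainderNum_div_remainderDen hm' hx' hkn 2).congr' ?_ .rfl,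
    (isBigO_remainderNum_div_remainderDen hm' hx' hkn 1).congr' ?_ .rfl⟩ <;>
  filter_upwards [hrem] with z hz
  · rw [hW]
    exact hz.1.symm
  · rw [hZ]
    exact hz.2.symm

theorem weyl_functions_approx (n : ℕ) (hn : 1 ≤ n) (x m : ℕ → ℝ)
    (hm : ∀ i, 1 ≤ i → i ≤ n → 0 < m i)
    (hx : ∀ i, 1 ≤ i → i < n → x i < x (i + 1))
    (W Z : ℝ → ℝ)
    (hW : ∀ z, W z = -(ABCvec x m n z 1) / (2 * z * ABCvec x m n z 0))
    (hZ : ∀ z, Z z = ABCvec x m n z 2 / (2 * z * ABCvec x m n z 0))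
    (k : ℕ) (hk1 : 1 ≤ k) (hkn : k ≤ n) :
    ((fun z : ℝ => W z + Sblock x m n k z 1 0 / (2 * z * Sblock x m n k z 0 0))
        =O[Filter.atTop] (fun z : ℝ => 1 / z ^ (k + 1))) ∧
    ((fun z : ℝ => Z z - Sblock x m n k z 2 0 / (2 * z * Sblock x m n k z 0 0))
        =O[Filter.atTop] (fun z : ℝ => 1 / z ^ (k + 1))) :=
  weyl_functions_approx_general n x m hm hx W Z hW hZ k hkn
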